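/- arXiv:2602.01564 — 4 statements merged into one kernel-verified Lean document; each statement's English description precedes it below -/
import Mathlib

section
/- Closed form of the Nikaido–Isoda error: Let f be continuous on 𝕋^n × 𝕋^n and let μ, ν ∈ 𝒫(𝕋^n) be absolutely continuous with H(μ) < ∞ and H(ν) < ∞. Then NI(μ,ν) = H(μ) + H(ν) + log ∫_{𝕋^n} e^{U_μ(y)} dy + log ∫_{𝕋^n} e^{−V_ν(x)} dx, where U_μ(y) = ∫ f(x,y) dμ(x) and V_ν(x) = ∫ f(x,y) dν(y). -/
open MeasureTheory

theorem Real.fact_zero_lt_one : Fact ((0 : ℝ) < 1) :=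
  ⟨zero_lt_one⟩

attribute [local instance] Real.fact_zero_lt_one

/-- The flat torus `ℝⁿ/ℤⁿ`, modeled as a product of circles of length `1`, equipped with
its (probability) Haar/Lebesgue measure `volume`. -/
abbrev Torus (n : ℕ) := Fin n → AddCircle (1 : ℝ)

/-- The density of a measure on the torus with respect to the Lebesgue (probability) measure. -/
noncomputable def density {n : ℕ} (ν : Measure (Torus n)) : Torus n → ℝ :=
  fun x => (ν.rnDeriv volume x).toReal

/-- A measure has finite entropy `H(ν) = ∫ ρ log ρ dx < ∞` iff it is absolutely continuous with
respect to Lebesgue measure and `ρ log ρ` is integrable. -/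
def entAdmissible {n : ℕ} (ν : Measure (Torus n)) : Prop :=
  ν ≪ (volume : Measure (Torus n)) ∧
    Integrable (fun x => density ν x * Real.log (density ν x)) (volume : Measure (Torus n))

/-- The (negative) entropy `H(ν) = ∫ ρ log ρ dx` of an absolutely continuous measure. -/
noncomputable def Hent {n : ℕ} (ν : Measure (Torus n)) : ℝ :=
  ∫ x, density ν x * Real.log (density ν x)

open Classical in
/-- The payoff functional `F(μ,ν) = ∬ f dμ dν + H(μ) − H(ν)`, as an extended real number:
it equals `−∞ = ⊥` when `H(ν) = +∞` (and `H(μ) < ∞`), and `+∞ = ⊤` when `H(μ) = +∞`. -/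
noncomputable def Fval {n : ℕ} (f : Torus n → Torus n → ℝ) (μ ν : Measure (Torus n)) : EReal :=
  if entAdmissible μ then
    (if entAdmissible ν then (((∫ x, ∫ y, f x y ∂ν ∂μ) + Hent μ - Hent ν : ℝ) : EReal) else ⊥)
  else ⊤

/-- The Nikaido–Isoda error `NI(μ,ν) = sup_{ν'} F(μ,ν') − inf_{μ'} F(μ',ν)`, the suprema and
infima being taken over all Borel probability measures on the torus. -/
noncomputable def NIval {n : ℕ} (f : Torus n → Torus n → ℝ) (μ ν : Measure (Torus n)) : EReal :=
  (⨆ ν' ∈ {m : Measure (Torus n) | IsProbabilityMeasure m}, Fval f μ ν')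
    - (⨅ μ' ∈ {m : Measure (Torus n) | IsProbabilityMeasure m}, Fval f μ' ν)

/-!
Both terms of the Nikaido–Isoda error are Gibbs variational problems. By Fubini,
`F(μ, ν') = H(μ) + (∫ U_μ dν' - H(ν'))` and `-F(μ', ν) = H(ν) + (∫ (-V_ν) dμ' - H(μ'))`, and for
continuous `W` one has `sup_ρ (∫ W dρ - H(ρ)) = log ∫ e^W`: the inequality is Gibbs' inequality
`KL(ρ ‖ e^W dx / Z) ≥ 0` written out, and the supremum is attained at the tilted measure
`e^W dx / Z`, for which the Kullback–Leibler divergence vanishes.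
-/

open Real InformationTheory

section Gibbs

variable {α : Type*} {mα : MeasurableSpace α} {μ ν : Measure α} {f : α → ℝ}

theorem integral_sub_integral_llr_le_log_integral_exp [IsProbabilityMeasure μ]
    [SigmaFinite ν] (hμν : μ ≪ ν) (h_int : Integrable (llr μ ν) μ) (hfμ : Integrable f μ)
    (hfν : Integrable (fun x ↦ exp (f x)) ν) :
    ∫ x, f x ∂μ - ∫ x, llr μ ν x ∂μ ≤ log (∫ x, exp (f x) ∂ν) := by
  have : NeZero ν := ⟨fun h ↦ IsProbabilityMeasure.ne_zero μ (by simpa [h] using hμν)⟩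
  have := isProbabilityMeasure_tilted hfν
  have hgibbs := integral_llr_add_sub_measure_univ_nonneg
    (hμν.trans (absolutelyContinuous_tilted hfν)) (integrable_llr_tilted_right hμν hfμ h_int hfν)
  rw [integral_llr_tilted_right hμν hfμ hfν h_int] at hgibbs
  simp only [probReal_univ] at hgibbs
  linarith

theorem llr_tilted_self_ae_eq [SigmaFinite ν] (hfν : Integrable (fun x ↦ exp (f x)) ν) :
    llr (ν.tilted f) ν =ᵐ[ν.tilted f] fun x ↦ f x - log (∫ x, exp (f x) ∂ν) :=
  (tilted_absolutelyContinuous ν f).ae_le (log_rnDeriv_tilted_left_self hfν)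

theorem integrable_llr_tilted_self [SigmaFinite ν] (hfν : Integrable (fun x ↦ exp (f x)) ν)
    (hf : Integrable f (ν.tilted f)) : Integrable (llr (ν.tilted f) ν) (ν.tilted f) :=
  (integrable_congr (llr_tilted_self_ae_eq hfν)).2 (hf.sub (integrable_const _))

theorem integral_sub_integral_llr_tilted_self [SigmaFinite ν] [NeZero ν]
    (hfν : Integrable (fun x ↦ exp (f x)) ν) (hf : Integrable f (ν.tilted f)) :
    ∫ x, f x ∂(ν.tilted f) - ∫ x, llr (ν.tilted f) ν x ∂(ν.tilted f)
      = log (∫ x, exp (f x) ∂ν) := by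
  have := isProbabilityMeasure_tilted hfν
  rw [integral_congr_ae (llr_tilted_self_ae_eq hfν), integral_sub hf (integrable_const _)]
  simp

end Gibbs

instance : IsProbabilityMeasure (volume : Measure (AddCircle (1 : ℝ))) :=
  ⟨UnitAddCircle.measure_univ⟩

theorem Continuous.integrable_of_compactSpace {X : Type*} [TopologicalSpace X] [CompactSpace X]
    [MeasurableSpace X] [OpensMeasurableSpace X] {μ : Measure X} [IsFiniteMeasure μ]
    {E : Type*} [NormedAddCommGroup E] {g : X → E} (hg : Continuous g) : Integrable g μ :=
  hg.integrable_of_hasCompactSupport (.of_compactSpace g)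

theorem continuous_integral_of_compactSpace {X Y : Type*} [TopologicalSpace X]
    [FirstCountableTopology X] [LocallyCompactSpace X] [TopologicalSpace Y] [CompactSpace Y]
    [MeasurableSpace Y] [OpensMeasurableSpace Y] {μ : Measure Y} [IsFiniteMeasure μ]
    {g : X → Y → ℝ} (hg : Continuous (Function.uncurry g)) :
    Continuous fun x ↦ ∫ y, g x y ∂μ := by
  simpa using continuous_parametric_integral_of_continuous (μ := μ) hg isCompact_univ

section Entropy

variable {n : ℕ}

theorem entAdmissible_iff_integrable_llr (ρ : Measure (Torus n)) [SigmaFinite ρ] :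
    entAdmissible ρ ↔ ρ ≪ volume ∧ Integrable (llr ρ volume) ρ :=
  and_congr_right integrable_rnDeriv_mul_log_iff

theorem Hent_eq_integral_llr {ρ : Measure (Torus n)} [SigmaFinite ρ] (hρ : ρ ≪ volume) :
    Hent ρ = ∫ x, llr ρ volume x ∂ρ :=
  integral_rnDeriv_mul_log hρ

theorem integral_sub_Hent_le_log_integral_exp {W : Torus n → ℝ} (hW : Continuous W)
    (ρ : Measure (Torus n)) [IsProbabilityMeasure ρ] (hρ : entAdmissible ρ) :
    ∫ x, W x ∂ρ - Hent ρ ≤ log (∫ x, exp (W x)) := by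
  obtain ⟨hac, hllr⟩ := (entAdmissible_iff_integrable_llr ρ).1 hρ
  rw [Hent_eq_integral_llr hac]
  exact integral_sub_integral_llr_le_log_integral_exp hac hllr hW.integrable_of_compactSpace
    (continuous_exp.comp hW).integrable_of_compactSpace

theorem exists_integral_sub_Hent_eq_log_integral_exp {W : Torus n → ℝ} (hW : Continuous W) :
    ∃ ρ : Measure (Torus n), IsProbabilityMeasure ρ ∧ entAdmissible ρ ∧
      ∫ x, W x ∂ρ - Hent ρ = log (∫ x, exp (W x)) := by
  have hexp : Integrable (fun x ↦ exp (W x)) (volume : Measure (Torus n)) :=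
    (continuous_exp.comp hW).integrable_of_compactSpace
  have := isProbabilityMeasure_tilted hexp
  have hWt : Integrable W (volume.tilted W) := hW.integrable_of_compactSpace
  have hac := tilted_absolutelyContinuous (volume : Measure (Torus n)) W
  refine ⟨volume.tilted W, this,
    (entAdmissible_iff_integrable_llr _).2 ⟨hac, integrable_llr_tilted_self hexp hWt⟩, ?_⟩
  rw [Hent_eq_integral_llr hac]
  exact integral_sub_integral_llr_tilted_self hexp hWt

end Entropy

section NikaidoIsoda

variable {n : ℕ} {f : Torus n → Torus n → ℝ}

theorem Fval_of_entAdmissible {μ ν : Measure (Torus n)} (hμ : entAdmissible μ)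
    (hν : entAdmissible ν) :
    Fval f μ ν = ((∫ x, ∫ y, f x y ∂ν ∂μ + Hent μ - Hent ν : ℝ) : EReal) := by
  rw [Fval, if_pos hμ, if_pos hν]

theorem iSup_Fval_right (hf : Continuous fun p : Torus n × Torus n => f p.1 p.2)
    (μ : Measure (Torus n)) [IsProbabilityMeasure μ] (hμ : entAdmissible μ) :
    ⨆ ν ∈ {m : Measure (Torus n) | IsProbabilityMeasure m}, Fval f μ ν
      = ((Hent μ + log (∫ y, exp (∫ x, f x y ∂μ)) : ℝ) : EReal) := by
  have hU : Continuous fun y ↦ ∫ x, f x y ∂μ :=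
    continuous_integral_of_compactSpace (hf.comp continuous_swap)
  have hfint {ν : Measure (Torus n)} [IsProbabilityMeasure ν] :
      Integrable (Function.uncurry f) (μ.prod ν) :=
    hf.integrable_of_compactSpace
  refine le_antisymm (iSup₂_le fun ν (_ : IsProbabilityMeasure ν) ↦ ?_) ?_
  · by_cases hν : entAdmissible ν
    · rw [Fval_of_entAdmissible hμ hν, EReal.coe_le_coe_iff, integral_integral_swap hfint]
      linarith [integral_sub_Hent_le_log_integral_exp hU ν hν]
    · simp [Fval, hμ, hν]
  · obtain ⟨ν, hν, hνH, hν_eq⟩ := exists_integral_sub_Hent_eq_log_integral_exp hU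
    refine le_iSup₂_of_le (f := fun ν (_ : IsProbabilityMeasure ν) ↦ Fval f μ ν) ν hν ?_
    rw [Fval_of_entAdmissible hμ hνH, EReal.coe_le_coe_iff, integral_integral_swap hfint]
    linarith

theorem iInf_Fval_left (hf : Continuous fun p : Torus n × Torus n => f p.1 p.2)
    (ν : Measure (Torus n)) [IsProbabilityMeasure ν] (hν : entAdmissible ν) :
    ⨅ μ ∈ {m : Measure (Torus n) | IsProbabilityMeasure m}, Fval f μ ν
      = ((-log (∫ x, exp (-∫ y, f x y ∂ν)) - Hent ν : ℝ) : EReal) := by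
  have hV : Continuous fun x ↦ -∫ y, f x y ∂ν :=
    (continuous_integral_of_compactSpace hf).neg
  refine le_antisymm ?_ (le_iInf₂ fun μ (_ : IsProbabilityMeasure μ) ↦ ?_)
  · obtain ⟨μ, hμ, hμH, hμ_eq⟩ := exists_integral_sub_Hent_eq_log_integral_exp hV
    refine iInf₂_le_of_le (f := fun μ (_ : IsProbabilityMeasure μ) ↦ Fval f μ ν) μ hμ ?_
    rw [integral_neg] at hμ_eq
    rw [Fval_of_entAdmissible hμH hν, EReal.coe_le_coe_iff]
    linarith
  · by_cases hμ : entAdmissible μ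
    · rw [Fval_of_entAdmissible hμ hν, EReal.coe_le_coe_iff]
      linarith [integral_neg (μ := μ) fun x ↦ ∫ y, f x y ∂ν,
        integral_sub_Hent_le_log_integral_exp hV μ hμ]
    · simp [Fval, hμ]

end NikaidoIsoda

theorem stmt2 (n : ℕ) (f : Torus n → Torus n → ℝ)
    (hf : Continuous fun p : Torus n × Torus n => f p.1 p.2)
    (μ ν : Measure (Torus n))
    (hμ : IsProbabilityMeasure μ) (hν : IsProbabilityMeasure ν)
    (hμH : entAdmissible μ) (hνH : entAdmissible ν) :
    NIval f μ ν
      = ((Hent μ + Hent ν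
          + Real.log (∫ y, Real.exp (∫ x, f x y ∂μ))
          + Real.log (∫ x, Real.exp (-∫ y, f x y ∂ν)) : ℝ) : EReal) := by
  rw [NIval, iSup_Fval_right hf μ hμH, iInf_Fval_left hf ν hνH, ← EReal.coe_sub]
  congr 1
  ring
end

section
/- Stability of the coercive quadratic form under C⁰-perturbation (core of Lemma 3.2): Let λ > 0, let ρ* be a continuous density on 𝕋^n with 0 < c ≤ ρ* ≤ C < ∞, and let A* be a continuous symmetric-matrix-valued field on 𝕋^n with sup‖A*‖ ≤ C, such that for all φ ∈ C³(𝕋^n), ∫ ( |∇²φ|² + ⟨∇φ, A* ∇φ⟩ ) ρ* dx ≥ λ ∫ |∇φ|² ρ* dx. Then for every η ∈ (0,1) there exists δ > 0, depending only on λ, η, c, C, with the following property: if ρ is a continuous probability density on 𝕋^n with sup|ρ − ρ*| ≤ δ and A is a continuous symmetric-matrix-valued field with sup‖A − A*‖ ≤ δ, then for all φ ∈ C³(𝕋^n), ∫ ( |∇²φ|² + ⟨∇φ, A ∇φ⟩ ) ρ dx ≥ (1 − η) λ ∫ |∇φ|² ρ dx. -/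
open MeasureTheory

/-- The fundamental domain `[0,1)ⁿ` of the torus `ℝⁿ/ℤⁿ`. -/
def cube (n : ℕ) : Set (Fin n → ℝ) := {x | ∀ i, x i ∈ Set.Ico (0 : ℝ) 1}

/-- `ℤⁿ`-periodicity of a function on `ℝⁿ` (i.e. the function descends to the torus). -/
def IsPeriodic {n : ℕ} (f : (Fin n → ℝ) → ℝ) : Prop :=
  ∀ (x : Fin n → ℝ) (k : Fin n → ℤ), f (x + fun i => (k i : ℝ)) = f x

/-- `ℤⁿ`-periodicity of a matrix field on `ℝⁿ`. -/
def IsPeriodicMat {n : ℕ} (A : (Fin n → ℝ) → Matrix (Fin n) (Fin n) ℝ) : Prop :=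
  ∀ (x : Fin n → ℝ) (k : Fin n → ℤ), A (x + fun i => (k i : ℝ)) = A x

/-- The gradient vector `∇f(x)` of `f : ℝⁿ → ℝ`. -/
noncomputable def grad {n : ℕ} (f : (Fin n → ℝ) → ℝ) (x : Fin n → ℝ) : Fin n → ℝ :=
  fun i => fderiv ℝ f x (Pi.single i 1)

/-- The Hessian matrix `∇²f(x)` of `f : ℝⁿ → ℝ`. -/
noncomputable def hess {n : ℕ} (f : (Fin n → ℝ) → ℝ) (x : Fin n → ℝ) :
    Matrix (Fin n) (Fin n) ℝ :=
  Matrix.of fun i j => fderiv ℝ (fun y => grad f y i) x (Pi.single j 1)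

/-- Euclidean inner product on `ℝⁿ`. -/
def dot {n : ℕ} (u v : Fin n → ℝ) : ℝ := ∑ i, u i * v i

lemma key_pw (c C δ G V s t P Q : ℝ) (hG : 0 ≤ G) (hV : 0 ≤ V)
    (hc : 0 < c) (hδ0 : 0 < δ) (hδc : δ ≤ c) (hQ1 : c ≤ Q) (_hQ2 : Q ≤ C) (hP : 0 ≤ P)
    (hPQ : |P - Q| ≤ δ) (hts : |t - s| ≤ δ * V) (hs : |s| ≤ C * V) :
    (c - δ) * ((G + s) * Q) - δ * (2*c + 2*C) * (V * Q) ≤ c * ((G + t) * P) := by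
  have hCV : 0 ≤ C * V := le_trans (abs_nonneg s) hs
  obtain ⟨hP1, hP2⟩ := abs_le.mp hPQ
  obtain ⟨hts1, hts2⟩ := abs_le.mp hts
  obtain ⟨hs1, hs2⟩ := abs_le.mp hs
  have hp1 : (c - δ) * Q ≤ c * P := by nlinarith
  have hpiece1 : (c - δ) * (G * Q) ≤ c * (G * P) := by
    nlinarith [mul_nonneg hG (sub_nonneg.2 hp1)]
  have e1 : -(δ*V)*P*c ≤ (t-s)*P*c :=
    mul_le_mul_of_nonneg_right (mul_le_mul_of_nonneg_right (by linarith) hP) hc.le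
  have e2 : c*δ*V*P ≤ 2*(c*δ*V*Q) := by
    nlinarith [mul_le_mul_of_nonneg_left (show P ≤ Q + δ by linarith)
      (mul_nonneg (mul_nonneg hc.le hδ0.le) hV),
      mul_nonneg (mul_nonneg (mul_nonneg hδ0.le hδ0.le) hV) (show (0:ℝ) ≤ Q - δ by linarith),
      mul_nonneg (mul_nonneg (mul_nonneg hδ0.le hV) (show (0:ℝ) ≤ Q - c by linarith)) hδ0.le]
  have e3 : -(C*V*δ)*c ≤ s*(P-Q)*c := by
    have habs : |s*(P-Q)| ≤ (C*V)*δ := by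
      calc |s*(P-Q)| = |s| * |P - Q| := abs_mul _ _
        _ ≤ (C*V)*δ := mul_le_mul hs hPQ (abs_nonneg _) hCV
    have := (abs_le.mp habs).1
    nlinarith
  have e4 : -(C*V*Q)*δ ≤ s*Q*δ := by
    have : -(C*V)*Q ≤ s*Q := mul_le_mul_of_nonneg_right hs1 (by linarith)
    nlinarith
  have e5 : C*V*δ*c ≤ C*V*δ*Q := by
    nlinarith [mul_nonneg (mul_nonneg hCV hδ0.le) (show (0:ℝ) ≤ Q - c by linarith)]
  linarith [e1, e2, e3, e4, e5, hpiece1]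

lemma measurableSet_cube (n : ℕ) : MeasurableSet (cube n) := by
  have h : cube n = Set.pi Set.univ (fun _ : Fin n => Set.Ico (0:ℝ) 1) := by
    ext x; simp [cube, Set.mem_pi]
  rw [h]
  exact MeasurableSet.univ_pi fun i => measurableSet_Ico

lemma integrableOn_cube {n : ℕ} {f : (Fin n → ℝ) → ℝ} (hf : Continuous f) :
    IntegrableOn f (cube n) := by
  apply (hf.integrableOn_Icc (a := 0) (b := 1)).mono_set
  intro x hx
  exact ⟨fun i => (hx i).1, fun i => (hx i).2.le⟩

lemma grad_cont {n : ℕ} {φ : (Fin n → ℝ) → ℝ} (hφ : ContDiff ℝ 3 φ) (i : Fin n) :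
    Continuous (fun x => grad φ x i) :=
  (hφ.continuous_fderiv (by norm_num)).clm_apply continuous_const

lemma hess_cont {n : ℕ} {φ : (Fin n → ℝ) → ℝ} (hφ : ContDiff ℝ 3 φ) (i j : Fin n) :
    Continuous (fun x => hess φ x i j) := by
  have h2 : ContDiff ℝ 2 (fun y => fderiv ℝ φ y (Pi.single i 1)) :=
    (hφ.fderiv_right (by norm_num)).clm_apply contDiff_const
  have h3 : Continuous (fderiv ℝ (fun y => grad φ y i)) := by
    have he : (fun y => grad φ y i) = fun y => fderiv ℝ φ y (Pi.single i 1) := rfl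
    rw [he]
    exact h2.continuous_fderiv (by norm_num)
  exact h3.clm_apply continuous_const

lemma dot_mulVec_cont {n : ℕ} {φ : (Fin n → ℝ) → ℝ} (hφ : ContDiff ℝ 3 φ)
    {A : (Fin n → ℝ) → Matrix (Fin n) (Fin n) ℝ} (hA : ∀ i j, Continuous fun x => A x i j) :
    Continuous (fun x => dot (grad φ x) ((A x).mulVec (grad φ x))) := by
  have he : (fun x => dot (grad φ x) ((A x).mulVec (grad φ x)))
      = fun x => ∑ i, grad φ x i * ∑ j, A x i j * grad φ x j := by
    funext x; simp [dot, Matrix.mulVec, dotProduct]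
  rw [he]
  exact continuous_finset_sum _ fun i _ => (grad_cont hφ i).mul
    (continuous_finset_sum _ fun j _ => (hA i j).mul (grad_cont hφ j))

lemma dot_sub_mulVec {n : ℕ} (u : Fin n → ℝ) (M N : Matrix (Fin n) (Fin n) ℝ) :
    dot u ((M - N).mulVec u) = dot u (M.mulVec u) - dot u (N.mulVec u) := by
  simp [dot, Matrix.sub_mulVec, mul_sub, Finset.sum_sub_distrib]

/-- **Stability of the coercive quadratic form under `C⁰`-perturbation.** If the quadratic form
`φ ↦ ∫ (|∇²φ|² + ⟨∇φ, A* ∇φ⟩) ρ* dx` is `λ`-coercive (against `∫|∇φ|² ρ* dx`) for a continuous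
density `c ≤ ρ* ≤ C` and a continuous symmetric matrix field with `sup‖A*‖ ≤ C` (operator-norm
bound, expressed through the quadratic form), then for every `η ∈ (0,1)` there is `δ > 0`,
depending only on `λ, η, c, C`, such that any continuous probability density `ρ` with
`sup|ρ − ρ*| ≤ δ` and any continuous symmetric matrix field `A` with `sup‖A − A*‖ ≤ δ` yield a
`(1−η)λ`-coercive quadratic form. -/
theorem stmt8 (n : ℕ) (lam c C : ℝ) (hlam : 0 < lam) (hc : 0 < c) (η : ℝ)
    (hη0 : 0 < η) (hη1 : η < 1) :
    ∃ δ : ℝ, 0 < δ ∧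
      ∀ (ρstar : (Fin n → ℝ) → ℝ) (Astar : (Fin n → ℝ) → Matrix (Fin n) (Fin n) ℝ),
        Continuous ρstar → IsPeriodic ρstar →
        (∀ x, c ≤ ρstar x) → (∀ x, ρstar x ≤ C) →
        (∀ i j, Continuous fun x => Astar x i j) → IsPeriodicMat Astar →
        (∀ x, (Astar x).IsSymm) →
        (∀ x u, |dot u ((Astar x).mulVec u)| ≤ C * dot u u) →
        (∀ φ : (Fin n → ℝ) → ℝ, ContDiff ℝ 3 φ → IsPeriodic φ →
          lam * ∫ x in cube n, dot (grad φ x) (grad φ x) * ρstar x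
            ≤ ∫ x in cube n,
                ((∑ i, ∑ j, hess φ x i j ^ 2)
                  + dot (grad φ x) ((Astar x).mulVec (grad φ x))) * ρstar x) →
        ∀ (ρ : (Fin n → ℝ) → ℝ) (A : (Fin n → ℝ) → Matrix (Fin n) (Fin n) ℝ),
          Continuous ρ → IsPeriodic ρ →
          (∀ x, 0 ≤ ρ x) → (∫ x in cube n, ρ x) = 1 →
          (∀ x, |ρ x - ρstar x| ≤ δ) →
          (∀ i j, Continuous fun x => A x i j) → IsPeriodicMat A →
          (∀ x, (A x).IsSymm) →
          (∀ x u, |dot u ((A x - Astar x).mulVec u)| ≤ δ * dot u u) →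
          ∀ φ : (Fin n → ℝ) → ℝ, ContDiff ℝ 3 φ → IsPeriodic φ →
            (1 - η) * lam * ∫ x in cube n, dot (grad φ x) (grad φ x) * ρ x
              ≤ ∫ x in cube n,
                  ((∑ i, ∑ j, hess φ x i j ^ 2)
                    + dot (grad φ x) ((A x).mulVec (grad φ x))) * ρ x := by
  have hD0 : 0 < 2*lam + 2*c + 2*|C| := by positivity
  refine ⟨min c (η*lam*c/(2*lam + 2*c + 2*|C|)), lt_min hc (by positivity), ?_⟩
  set δ := min c (η*lam*c/(2*lam + 2*c + 2*|C|)) with hδdef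
  have hδ0 : 0 < δ := lt_min hc (by positivity)
  have hδc : δ ≤ c := min_le_left _ _
  have hδD : δ * (2*lam + 2*c + 2*|C|) ≤ η*lam*c := by
    have h := min_le_right c (η*lam*c/(2*lam + 2*c + 2*|C|))
    calc δ * (2*lam + 2*c + 2*|C|)
        ≤ (η*lam*c/(2*lam + 2*c + 2*|C|)) * (2*lam + 2*c + 2*|C|) :=
          mul_le_mul_of_nonneg_right h hD0.le
      _ = η*lam*c := by field_simp
  intro ρstar Astar hρsc _hρsper hρs1 hρs2 hAsc _hAsper _hAssym hAsbd hcoerc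
    ρ A hρc _hρper hρ0 _hρint hρδ hAc _hAper _hAsym hAbd φ hφ hφper
  have hC : 0 < C := lt_of_lt_of_le hc (le_trans (hρs1 0) (hρs2 0))
  have hδD' : δ * (2*lam + 2*c + 2*C) ≤ η*lam*c := by
    rwa [abs_of_pos hC] at hδD
  -- nonnegativity of the pointwise quantities
  have hg0 : ∀ x : Fin n → ℝ, 0 ≤ ∑ i, ∑ j, hess φ x i j ^ 2 := fun x =>
    Finset.sum_nonneg fun i _ => Finset.sum_nonneg fun j _ => sq_nonneg _
  have hv0 : ∀ x : Fin n → ℝ, 0 ≤ dot (grad φ x) (grad φ x) := fun x =>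
    Finset.sum_nonneg fun i _ => mul_self_nonneg _
  -- continuity
  have hgc : Continuous (fun x : Fin n → ℝ => ∑ i, ∑ j, hess φ x i j ^ 2) :=
    continuous_finset_sum _ fun i _ => continuous_finset_sum _ fun j _ =>
      (hess_cont hφ i j).pow 2
  have hvc : Continuous (fun x : Fin n → ℝ => dot (grad φ x) (grad φ x)) := by
    simp only [dot]
    exact continuous_finset_sum _ fun i _ => (grad_cont hφ i).mul (grad_cont hφ i)
  have hac := dot_mulVec_cont hφ hAc
  have hasc := dot_mulVec_cont hφ hAsc
  -- integrability
  have hi1 : IntegrableOn (fun x => ((∑ i, ∑ j, hess φ x i j ^ 2)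
      + dot (grad φ x) ((A x).mulVec (grad φ x))) * ρ x) (cube n) :=
    integrableOn_cube ((hgc.add hac).mul hρc)
  have hi2 : IntegrableOn (fun x => ((∑ i, ∑ j, hess φ x i j ^ 2)
      + dot (grad φ x) ((Astar x).mulVec (grad φ x))) * ρstar x) (cube n) :=
    integrableOn_cube ((hgc.add hasc).mul hρsc)
  have hi3 : IntegrableOn (fun x => dot (grad φ x) (grad φ x) * ρstar x) (cube n) :=
    integrableOn_cube (hvc.mul hρsc)
  have hi4 : IntegrableOn (fun x => dot (grad φ x) (grad φ x) * ρ x) (cube n) :=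
    integrableOn_cube (hvc.mul hρc)
  -- the bound |a - a*| ≤ δ v
  have habd : ∀ x, |dot (grad φ x) ((A x).mulVec (grad φ x))
      - dot (grad φ x) ((Astar x).mulVec (grad φ x))| ≤ δ * dot (grad φ x) (grad φ x) := by
    intro x
    rw [← dot_sub_mulVec]
    exact hAbd x _
  -- Step A
  have stepA : (c - δ) * (∫ x in cube n, ((∑ i, ∑ j, hess φ x i j ^ 2)
        + dot (grad φ x) ((Astar x).mulVec (grad φ x))) * ρstar x)
      - δ * (2*c + 2*C) * (∫ x in cube n, dot (grad φ x) (grad φ x) * ρstar x)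
      ≤ c * ∫ x in cube n, ((∑ i, ∑ j, hess φ x i j ^ 2)
        + dot (grad φ x) ((A x).mulVec (grad φ x))) * ρ x := by
    rw [← integral_const_mul, ← integral_const_mul, ← integral_const_mul,
      ← integral_sub (hi2.const_mul _) (hi3.const_mul _)]
    apply setIntegral_mono_on ((hi2.const_mul _).sub (hi3.const_mul _)) (hi1.const_mul _)
      (measurableSet_cube n)
    intro x _
    exact key_pw c C δ _ _ _ _ _ _ (hg0 x) (hv0 x) hc hδ0 hδc (hρs1 x) (hρs2 x) (hρ0 x)
      (hρδ x) (habd x) (hAsbd x _)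
  -- Step B : coercivity
  have stepB := hcoerc φ hφ hφper
  -- Step C
  have stepC : c * (∫ x in cube n, dot (grad φ x) (grad φ x) * ρ x)
      ≤ (c + δ) * ∫ x in cube n, dot (grad φ x) (grad φ x) * ρstar x := by
    rw [← integral_const_mul, ← integral_const_mul]
    apply setIntegral_mono_on (hi4.const_mul _) (hi3.const_mul _) (measurableSet_cube n)
    intro x _
    have h1 := (abs_le.mp (hρδ x)).2
    have h2 : c * ρ x ≤ (c + δ) * ρstar x := by
      nlinarith [mul_le_mul_of_nonneg_left (hρs1 x) hδ0.le]
    have h3 := mul_le_mul_of_nonneg_left h2 (hv0 x)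
    linarith [h3]
  have hI3nn : 0 ≤ ∫ x in cube n, dot (grad φ x) (grad φ x) * ρstar x :=
    setIntegral_nonneg (measurableSet_cube n) fun x _ =>
      mul_nonneg (hv0 x) (le_trans hc.le (hρs1 x))
  -- arithmetic conclusion
  have hmnn : (0:ℝ) ≤ (1 - η) * lam := by nlinarith
  have hcoef : (1 - η) * lam * (c + δ) ≤ (c - δ) * lam - δ * (2*c + 2*C) := by
    nlinarith [mul_pos (mul_pos hη0 hlam) hδ0]
  set I1 := ∫ x in cube n, ((∑ i, ∑ j, hess φ x i j ^ 2)
    + dot (grad φ x) ((A x).mulVec (grad φ x))) * ρ x with hI1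
  set I2 := ∫ x in cube n, ((∑ i, ∑ j, hess φ x i j ^ 2)
    + dot (grad φ x) ((Astar x).mulVec (grad φ x))) * ρstar x with hI2
  set I3 := ∫ x in cube n, dot (grad φ x) (grad φ x) * ρstar x with hI3
  set I4 := ∫ x in cube n, dot (grad φ x) (grad φ x) * ρ x with hI4
  have h8 : (1 - η) * lam * ((c + δ) * I3) ≤ ((c - δ) * lam - δ * (2*c + 2*C)) * I3 := by
    have := mul_le_mul_of_nonneg_right hcoef hI3nn
    nlinarith [this]
  have h6 : (c - δ) * (lam * I3) ≤ (c - δ) * I2 :=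
    mul_le_mul_of_nonneg_left stepB (by linarith)
  have h7 : (1 - η) * lam * (c * I4) ≤ (1 - η) * lam * ((c + δ) * I3) :=
    mul_le_mul_of_nonneg_left stepC hmnn
  have hfin : c * ((1 - η) * lam * I4) ≤ c * I1 := by nlinarith [h6, h7, h8, stepA]
  exact le_of_mul_le_mul_left hfin hc
end

section
/- Gradient identity for the reparametrized displacement potential (from the proof of Proposition 3.3): Let φ: ℝ^n → ℝ be a C², ℤ^n-periodic-gradient function and let s ∈ ℝ satisfy |s| · sup‖∇²φ‖ < 1, so that T_s := id + s∇φ is a C¹ diffeomorphism of ℝ^n. Define ψ(y) := φ(T_s^{−1}(y)) + (s/2) |∇φ(T_s^{−1}(y))|². Then ψ is differentiable and ∇ψ(y) = ∇φ(T_s^{−1}(y)) for every y ∈ ℝ^n. -/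
open MeasureTheory

/-! The Hessian is symmetric, so the bound on its quadratic form bounds its Euclidean operator norm
by `K`. Hence `s∇φ` is an `|s|K`-Lipschitz perturbation of the identity with `|s|K < 1`, which
makes `T_s` a homeomorphism whose derivative `id + s∇²φ` is invertible everywhere, so `T_s⁻¹` is
differentiable. For `Φ = φ + (s/2)|∇φ|²` the product rule gives
`DΦ(x) = ⟨∇φ(x), (id + s∇²φ(x)) ·⟩ = ⟨∇φ(x), DT_s(x) ·⟩`, and since `ψ = Φ ∘ T_s⁻¹` the chain
rule leaves `Dψ(y) = ⟨∇φ(T_s⁻¹ y), ·⟩`. -/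

open Function Set Filter ContinuousLinearMap
open scoped NNReal

section Coordinates

variable {n : ℕ}

theorem apply_eq_dot_apply_single (L : (Fin n → ℝ) →L[ℝ] ℝ) (v : Fin n → ℝ) :
    L v = dot (fun i => L (Pi.single i 1)) v := by
  conv_lhs => rw [← Finset.univ_sum_single v]
  simp only [map_sum, dot]
  refine Finset.sum_congr rfl fun i _ => ?_
  rw [mul_comm, ← smul_eq_mul, ← map_smul, ← Pi.single_smul, smul_eq_mul, mul_one]

theorem dot_comm (u v : Fin n → ℝ) : dot u v = dot v u :=
  Finset.sum_congr rfl fun _ _ => mul_comm _ _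

theorem fderiv_apply_eq_dot_grad (f : (Fin n → ℝ) → ℝ) (x v : Fin n → ℝ) :
    fderiv ℝ f x v = dot (grad f x) v :=
  apply_eq_dot_apply_single _ v

theorem grad_eq_comp_fderiv (f : (Fin n → ℝ) → ℝ) :
    grad f = (ContinuousLinearMap.pi fun i => apply ℝ ℝ (Pi.single i 1)) ∘ fderiv ℝ f :=
  rfl

theorem ContDiff.grad {f : (Fin n → ℝ) → ℝ} {k : WithTop ℕ∞} (hf : ContDiff ℝ (k + 1) f) :
    ContDiff ℝ k (grad f) := by
  rw [grad_eq_comp_fderiv]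
  exact (ContinuousLinearMap.contDiff _).comp (hf.fderiv_right le_rfl)

theorem fderiv_grad_apply {f : (Fin n → ℝ) → ℝ} {x : Fin n → ℝ}
    (hf : DifferentiableAt ℝ (fderiv ℝ f) x) (v : Fin n → ℝ) (i : Fin n) :
    fderiv ℝ (grad f) x v i = fderiv ℝ (fderiv ℝ f) x v (Pi.single i 1) := by
  rw [grad_eq_comp_fderiv, ((ContinuousLinearMap.hasFDerivAt _).comp x hf.hasFDerivAt).fderiv]
  rfl

theorem hess_mulVec {f : (Fin n → ℝ) → ℝ} {x : Fin n → ℝ}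
    (hf : DifferentiableAt ℝ (grad f) x) (u : Fin n → ℝ) :
    (hess f x).mulVec u = fderiv ℝ (grad f) x u := by
  ext i
  have hi : fderiv ℝ (fun y => grad f y i) x = (proj i).comp (fderiv ℝ (grad f) x) :=
    ((proj i).hasFDerivAt.comp x hf.hasFDerivAt :).fderiv
  simp only [Matrix.mulVec, dotProduct, hess, Matrix.of_apply, hi]
  rw [← proj_apply (R := ℝ) (φ := fun _ : Fin n => ℝ) i (fderiv ℝ (grad f) x u),
    ← ContinuousLinearMap.comp_apply, apply_eq_dot_apply_single]
  rfl

theorem dot_fderiv_grad_comm {f : (Fin n → ℝ) → ℝ} {x : Fin n → ℝ} (hf : ContDiffAt ℝ 2 f x)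
    (u v : Fin n → ℝ) : dot u (fderiv ℝ (grad f) x v) = dot v (fderiv ℝ (grad f) x u) := by
  have hdiff : DifferentiableAt ℝ (fderiv ℝ f) x :=
    (hf.fderiv_right (m := 1) le_rfl).differentiableAt one_ne_zero
  have hsecond (u v : Fin n → ℝ) : dot u (fderiv ℝ (grad f) x v) = fderiv ℝ (fderiv ℝ f) x v u := by
    simp only [funext (fderiv_grad_apply hdiff v), dot_comm u, apply_eq_dot_apply_single _ u]
  rw [hsecond, hsecond]
  exact hf.isSymmSndFDerivAt (by simp) v u

end Coordinates

section SymmetricOperator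

variable {E : Type*} [NormedAddCommGroup E] [InnerProductSpace ℝ E]

theorem ContinuousLinearMap.opNorm_le_of_abs_inner_self_le {T : E →L[ℝ] E}
    (hT : (T : E →ₗ[ℝ] E).IsSymmetric) {K : ℝ} (hK0 : 0 ≤ K)
    (hK : ∀ x, |inner ℝ (T x) x| ≤ K * ‖x‖ ^ 2) : ‖T‖ ≤ K := by
  rw [T.norm_eq_iSup_rayleighQuotient hT]
  refine ciSup_le fun x => ?_
  rcases eq_or_ne x 0 with rfl | hx
  · simpa using hK0
  rw [rayleighQuotient, reApplyInnerSelf_apply, RCLike.re_to_real, abs_div, abs_sq,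
    div_le_iff₀ (by positivity)]
  exact hK x

end SymmetricOperator

section PerturbationOfIdentity

variable {E : Type*} [NormedAddCommGroup E] [NormedSpace ℝ E] {g : E → E} {s : ℝ} {K : ℝ≥0}

theorem approximatesLinearOn_add_smul (hg : LipschitzWith K g) (s : ℝ) :
    ApproximatesLinearOn (fun x => x + s • g x)
      ((ContinuousLinearEquiv.refl ℝ E : E ≃L[ℝ] E) : E →L[ℝ] E) univ (‖s‖₊ * K) := by
  rw [ApproximatesLinearOn.approximatesLinearOn_iff_lipschitzOnWith, lipschitzOnWith_univ]
  have hsub : (fun x => x + s • g x) - ⇑((ContinuousLinearEquiv.refl ℝ E : E ≃L[ℝ] E) : E →L[ℝ] E)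
      = (s • ·) ∘ g := by
    funext x
    simp
  rw [hsub]
  exact (lipschitzWith_smul s).comp hg

variable [CompleteSpace E]

noncomputable def Homeomorph.addSMul (hg : LipschitzWith K g) (hs : ‖s‖₊ * K < 1) : E ≃ₜ E :=
  (approximatesLinearOn_add_smul hg s).toHomeomorph _ <| by
    rcases subsingleton_or_nontrivial E with hE | hE
    · exact .inl hE
    · right
      simpa using hs

@[simp]
theorem Homeomorph.addSMul_apply (hg : LipschitzWith K g) (hs : ‖s‖₊ * K < 1) (x : E) :
    Homeomorph.addSMul hg hs x = x + s • g x :=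
  rfl

theorem Homeomorph.differentiableAt_addSMul_symm (hg : LipschitzWith K g)
    (hgd : Differentiable ℝ g) (hs : ‖s‖₊ * K < 1) (y : E) :
    DifferentiableAt ℝ (Homeomorph.addSMul hg hs).symm y := by
  set T := Homeomorph.addSMul hg hs
  set G := fderiv ℝ g (T.symm y)
  have hsG : ‖-(s • G)‖ < 1 := by
    rw [norm_neg, norm_smul]
    calc ‖s‖ * ‖G‖ ≤ ‖s‖ * K := by gcongr; exact norm_fderiv_le_of_lipschitz ℝ hg
      _ < 1 := by exact_mod_cast hs
  have hT : HasFDerivAt T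
      (ContinuousLinearEquiv.ofUnit (Units.oneSub _ hsG) : E →L[ℝ] E) (T.symm y) := by
    have hunit : (ContinuousLinearEquiv.ofUnit (Units.oneSub _ hsG) : E →L[ℝ] E) = 1 + s • G := by
      ext v
      show (Units.oneSub _ hsG : E →L[ℝ] E) v = _
      simp
    rw [hunit]
    exact (hasFDerivAt_id _).add ((hgd _).hasFDerivAt.const_smul s)
  exact (hT.of_local_left_inverse T.symm.continuous.continuousAt
    (Eventually.of_forall T.apply_symm_apply)).differentiableAt

end PerturbationOfIdentity

section EuclideanCoordinates

variable {n : ℕ}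

local notation "e" => EuclideanSpace.equiv (Fin n) ℝ

theorem inner_eq_dot_euclideanSpace_equiv (x y : EuclideanSpace ℝ (Fin n)) :
    inner ℝ x y = dot (e x) (e y) := by
  rw [EuclideanSpace.inner_eq_star_dotProduct, star_trivial, dotProduct_comm]
  rfl

theorem norm_conj_euclideanSpace_equiv_le {A : (Fin n → ℝ) →L[ℝ] (Fin n → ℝ)}
    (hA : ∀ u v, dot u (A v) = dot v (A u)) {K : ℝ} (hK0 : 0 ≤ K)
    (hK : ∀ u, |dot u (A u)| ≤ K * dot u u) :
    ‖((e).symm : (Fin n → ℝ) →L[ℝ] EuclideanSpace ℝ (Fin n)).comp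
      (A.comp ((e) : EuclideanSpace ℝ (Fin n) →L[ℝ] (Fin n → ℝ)))‖ ≤ K := by
  refine opNorm_le_of_abs_inner_self_le (fun x y => ?_) hK0 fun x => ?_
  · simp only [coe_coe, inner_eq_dot_euclideanSpace_equiv, ContinuousLinearMap.comp_apply,
      ContinuousLinearEquiv.coe_coe, ContinuousLinearEquiv.apply_symm_apply]
    rw [dot_comm, hA]
  · simpa only [← real_inner_self_eq_norm_sq, inner_eq_dot_euclideanSpace_equiv,
      ContinuousLinearMap.comp_apply, ContinuousLinearEquiv.coe_coe,
      ContinuousLinearEquiv.apply_symm_apply, dot_comm _ (e x)] using hK (e x)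

theorem exists_homeomorph_coe_eq_add_smul_grad {φ : (Fin n → ℝ) → ℝ} {s K : ℝ}
    (hφ : ContDiff ℝ 2 φ) (hK0 : 0 ≤ K)
    (hK : ∀ x u, |dot u (fderiv ℝ (grad φ) x u)| ≤ K * dot u u) (hs : |s| * K < 1) :
    ∃ T : (Fin n → ℝ) ≃ₜ (Fin n → ℝ),
      ⇑T = (fun x => x + s • grad φ x) ∧ ∀ y, DifferentiableAt ℝ T.symm y := by
  have hgrad : Differentiable ℝ (grad φ) := (hφ.grad (k := 1)).differentiable one_ne_zero
  -- The bound on `∇²φ` controls the ℓ² operator norm, not the sup norm of `Fin n → ℝ`.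
  set gE : EuclideanSpace ℝ (Fin n) → EuclideanSpace ℝ (Fin n) := (e).symm ∘ grad φ ∘ e
  have hgE (x) : HasFDerivAt gE (((e).symm : (Fin n → ℝ) →L[ℝ] EuclideanSpace ℝ (Fin n)).comp
      ((fderiv ℝ (grad φ) (e x)).comp ((e) : EuclideanSpace ℝ (Fin n) →L[ℝ] (Fin n → ℝ)))) x :=
    (e).symm.hasFDerivAt.comp x ((hgrad _).hasFDerivAt.comp x (e).hasFDerivAt)
  have hLip : LipschitzWith K.toNNReal gE := by
    refine lipschitzWith_of_nnnorm_fderiv_le (fun x => (hgE x).differentiableAt) fun x => ?_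
    rw [(hgE x).fderiv, ← NNReal.coe_le_coe, coe_nnnorm, Real.coe_toNNReal _ hK0]
    exact norm_conj_euclideanSpace_equiv_le (dot_fderiv_grad_comm hφ.contDiffAt) hK0 (hK _)
  have hs' : ‖s‖₊ * K.toNNReal < 1 := by
    rw [← NNReal.coe_lt_coe]
    simpa [Real.coe_toNNReal _ hK0] using hs
  set TE := Homeomorph.addSMul hLip hs'
  refine ⟨(e).symm.toHomeomorph.trans (TE.trans (e).toHomeomorph), ?_, fun y => ?_⟩
  · rfl
  · have hTE := Homeomorph.differentiableAt_addSMul_symm hLip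
      (fun x => (hgE x).differentiableAt) hs' ((e).symm y)
    exact (e).differentiableAt.comp y (hTE.comp y (e).symm.differentiableAt)

end EuclideanCoordinates


theorem HasFDerivAt.comp_of_rightInverse {𝕜 : Type*} [NontriviallyNormedField 𝕜]
    {E F G : Type*} [NormedAddCommGroup E] [NormedSpace 𝕜 E] [NormedAddCommGroup F]
    [NormedSpace 𝕜 F] [NormedAddCommGroup G] [NormedSpace 𝕜 G]
    {T : E → F} {g : F → E} {Φ : E → G} {T' : E →L[𝕜] F} {L : F →L[𝕜] G} {y : F}
    (hΦ : HasFDerivAt Φ (L.comp T') (g y)) (hT : HasFDerivAt T T' (g y))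
    (hg : DifferentiableAt 𝕜 g y) (hTg : RightInverse g T) :
    HasFDerivAt (Φ ∘ g) L y := by
  have hid : T'.comp (fderiv 𝕜 g y) = ContinuousLinearMap.id 𝕜 F := by
    refine (hT.comp y hg.hasFDerivAt).unique ?_
    rw [hTg.comp_eq_id]
    exact hasFDerivAt_id y
  simpa only [ContinuousLinearMap.comp_assoc, hid, ContinuousLinearMap.comp_id]
    using hΦ.comp y hg.hasFDerivAt

theorem hasFDerivAt_add_half_smul_dot_grad {n : ℕ} {φ : (Fin n → ℝ) → ℝ} {x : Fin n → ℝ}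
    (hφ : DifferentiableAt ℝ φ x) (hgrad : DifferentiableAt ℝ (grad φ) x) (s : ℝ) :
    HasFDerivAt (fun z => φ z + (s / 2) * dot (grad φ z) (grad φ z))
      ((∑ i, grad φ x i • proj (R := ℝ) (φ := fun _ : Fin n => ℝ) i).comp
        (ContinuousLinearMap.id ℝ _ + s • fderiv ℝ (grad φ) x)) x := by
  have hcoord (i : Fin n) : HasFDerivAt (fun z => grad φ z i)
      ((proj i).comp (fderiv ℝ (grad φ) x)) x :=
    ((proj i).hasFDerivAt.comp x hgrad.hasFDerivAt :)
  have hdot := HasFDerivAt.fun_sum (u := Finset.univ) fun i _ => (hcoord i).mul (hcoord i)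
  refine (hφ.hasFDerivAt.add (hdot.const_mul (s / 2))).congr_fderiv <| ext fun v => ?_
  simp only [add_apply, smul_apply, sum_apply, ContinuousLinearMap.comp_apply, proj_apply,
    smul_eq_mul, comp_add, ContinuousLinearMap.comp_id, comp_smulₛₗ, Real.ringHom_apply,
    fderiv_apply_eq_dot_grad, dot, Finset.mul_sum, ← Finset.sum_add_distrib]
  exact Finset.sum_congr rfl fun i _ => by ring

theorem stmt16_general (n : ℕ) (φ : (Fin n → ℝ) → ℝ) (hφ : ContDiff ℝ 2 φ)
    (s K : ℝ) (hK0 : 0 ≤ K)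
    (hK : ∀ x u, |dot u ((hess φ x).mulVec u)| ≤ K * dot u u)
    (hs : |s| * K < 1) :
    Function.Bijective (fun x : Fin n → ℝ => x + s • grad φ x) ∧
    ∀ y : Fin n → ℝ,
      HasFDerivAt
        (fun z : Fin n → ℝ =>
          φ (Function.invFun (fun x : Fin n → ℝ => x + s • grad φ x) z)
            + (s / 2) * dot
              (grad φ (Function.invFun (fun x : Fin n → ℝ => x + s • grad φ x) z))
              (grad φ (Function.invFun (fun x : Fin n → ℝ => x + s • grad φ x) z)))
        (∑ i, grad φ (Function.invFun (fun x : Fin n → ℝ => x + s • grad φ x) y) i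
          • ContinuousLinearMap.proj (R := ℝ) (φ := fun _ : Fin n => ℝ) i)
        y := by
  have hgrad : Differentiable ℝ (grad φ) := (hφ.grad (k := 1)).differentiable one_ne_zero
  obtain ⟨T, hT, hTsymm⟩ := exists_homeomorph_coe_eq_add_smul_grad hφ hK0
    (fun x u => hess_mulVec (hgrad x) u ▸ hK x u) hs
  rw [← hT, invFun_eq_of_injective_of_rightInverse T.injective T.apply_symm_apply]
  refine ⟨T.bijective, fun y => ?_⟩
  have hTx : HasFDerivAt T (ContinuousLinearMap.id ℝ _ + s • fderiv ℝ (grad φ) (T.symm y))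
      (T.symm y) := by
    rw [hT]
    exact (hasFDerivAt_id _).add ((hgrad _).hasFDerivAt.const_smul s)
  exact (hasFDerivAt_add_half_smul_dot_grad (hφ.differentiable two_ne_zero _) (hgrad _) s
    ).comp_of_rightInverse hTx (hTsymm y) T.apply_symm_apply

/-- **Gradient identity for the reparametrized displacement potential.** Let `φ : ℝⁿ → ℝ` be `C²`
with `ℤⁿ`-periodic gradient, and let `s` satisfy `|s| · sup‖∇²φ‖ < 1` (operator-norm bound on the
symmetric Hessian, expressed through its quadratic form), so that `T_s = id + s∇φ` is a
(`C¹`-)diffeomorphism of `ℝⁿ`. Define `ψ(y) = φ(T_s⁻¹ y) + (s/2)|∇φ(T_s⁻¹ y)|²`. Then `T_s` is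
bijective, and `ψ` is differentiable with `∇ψ(y) = ∇φ(T_s⁻¹ y)` for every `y`. -/
theorem stmt16 (n : ℕ) (φ : (Fin n → ℝ) → ℝ) (hφ : ContDiff ℝ 2 φ)
    (hper : ∀ (x : Fin n → ℝ) (k : Fin n → ℤ),
      grad φ (x + fun i => (k i : ℝ)) = grad φ x)
    (s K : ℝ) (hK0 : 0 ≤ K)
    (hK : ∀ x u, |dot u ((hess φ x).mulVec u)| ≤ K * dot u u)
    (hs : |s| * K < 1) :
    Function.Bijective (fun x : Fin n → ℝ => x + s • grad φ x) ∧
    ∀ y : Fin n → ℝ,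
      HasFDerivAt
        (fun z : Fin n → ℝ =>
          φ (Function.invFun (fun x : Fin n → ℝ => x + s • grad φ x) z)
            + (s / 2) * dot
              (grad φ (Function.invFun (fun x : Fin n → ℝ => x + s • grad φ x) z))
              (grad φ (Function.invFun (fun x : Fin n → ℝ => x + s • grad φ x) z)))
        (∑ i, grad φ (Function.invFun (fun x : Fin n → ℝ => x + s • grad φ x) y) i
          • ContinuousLinearMap.proj (R := ℝ) (φ := fun _ : Fin n => ℝ) i)
        y :=
  stmt16_general n φ hφ s K hK0 hK hs
end

section
/- Smoothing bound from a superlinear dissipative differential inequality (from the proof of Lemma 3.5): Let a, b, γ > 0 and let y: (0, ∞) → [0, ∞) be a differentiable function satisfying y'(t) ≤ − a · y(t)^{1+γ} + b · ( y(t) + 1 ) for all t > 0. Then there exists a constant C, depending only on a, b, and γ, such that y(t) ≤ C ( t^{−1/γ} + 1 ) for all t > 0. -/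
open Real Set

/-- No upcrossing lemma: if the derivative is negative whenever the function is ≥ M,
then once below M, it stays below M. -/
lemma barrier_aux (M : ℝ) (y y' : ℝ → ℝ)
    (hd : ∀ t : ℝ, 0 < t → HasDerivAt y (y' t) t)
    (hneg : ∀ v : ℝ, 0 < v → M ≤ y v → y' v < 0)
    (s t : ℝ) (hs : 0 < s) (hst : s ≤ t) (hys : y s ≤ M) : y t ≤ M := by
  by_contra h
  push_neg at h
  have hst' : s < t := by
    rcases eq_or_lt_of_le hst with rfl | h' 
    · linarith
    · exact h'
  have hcont : ContinuousOn y (Set.Icc s t) := fun u hu =>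
    ((hd u (lt_of_lt_of_le hs hu.1)).continuousAt).continuousWithinAt
  set S : Set ℝ := Set.Icc s t ∩ y ⁻¹' Set.Iic M with hS
  have hSne : S.Nonempty := ⟨s, ⟨le_refl s, hst⟩, hys⟩
  have hSbdd : BddAbove S := ⟨t, fun v hv => hv.1.2⟩
  have hSclosed : IsClosed S := hcont.preimage_isClosed_of_isClosed isClosed_Icc isClosed_Iic
  set u := sSup S with hu
  have huS : u ∈ S := hSclosed.csSup_mem hSne hSbdd
  have hus : s ≤ u := huS.1.1
  have hut : u ≤ t := huS.1.2
  have hyu : y u ≤ M := huS.2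
  have hune : u < t := lt_of_le_of_ne hut (fun he => by rw [he] at hyu; linarith)
  have hgt : ∀ v ∈ Set.Ioo u t, M < y v := by
    intro v hv
    by_contra hvle
    push_neg at hvle
    have hvS : v ∈ S := ⟨⟨le_trans hus hv.1.le, hv.2.le⟩, hvle⟩
    exact absurd (le_csSup hSbdd hvS) (not_le.2 hv.1)
  have hanti : StrictAntiOn y (Set.Icc u t) := by
    apply strictAntiOn_of_deriv_neg (convex_Icc u t)
    · exact fun v hv =>
        ((hd v (lt_of_lt_of_le (lt_of_lt_of_le hs hus) hv.1)).continuousAt).continuousWithinAt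
    · intro v hv
      rw [interior_Icc] at hv
      have hv0 : 0 < v := lt_of_lt_of_le hs (le_trans hus hv.1.le)
      rw [(hd v hv0).deriv]
      exact hneg v hv0 (hgt v hv).le
  have := hanti ⟨le_refl u, hut⟩ ⟨hut, le_refl t⟩ hune
  linarith

/-- **Smoothing bound from a superlinear dissipative differential inequality.** Let
`a, b, γ > 0` and let `y : (0,∞) → [0,∞)` be differentiable with
`y'(t) ≤ −a y(t)^{1+γ} + b (y(t) + 1)` for all `t > 0`. Then there is a constant `C`,
depending only on `a, b, γ`, with `y(t) ≤ C (t^{−1/γ} + 1)` for all `t > 0`. -/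
theorem stmt18 (a b γ : ℝ) (ha : 0 < a) (hb : 0 < b) (hγ : 0 < γ) :
    ∃ C : ℝ, ∀ (y y' : ℝ → ℝ),
      (∀ t : ℝ, 0 < t → 0 ≤ y t) →
      (∀ t : ℝ, 0 < t → HasDerivAt y (y' t) t) →
      (∀ t : ℝ, 0 < t → y' t ≤ -a * y t ^ (1 + γ) + b * (y t + 1)) →
      ∀ t : ℝ, 0 < t → y t ≤ C * (t ^ (-(1 / γ)) + 1) := by
  set M : ℝ := max 1 ((4 * b / a) ^ (1 / γ)) with hMdef
  have hM1 : (1 : ℝ) ≤ M := le_max_left _ _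
  have hM0 : (0 : ℝ) < M := lt_of_lt_of_le one_pos hM1
  have hMγ : 4 * b / a ≤ M ^ γ := by
    have hba : (0 : ℝ) ≤ 4 * b / a := by positivity
    have h1 : (4 * b / a) ^ (1 / γ) ≤ M := le_max_right _ _
    have h2 : ((4 * b / a) ^ (1 / γ)) ^ γ = 4 * b / a := by
      rw [← Real.rpow_mul hba, one_div_mul_cancel hγ.ne', Real.rpow_one]
    calc 4 * b / a = ((4 * b / a) ^ (1 / γ)) ^ γ := h2.symm
      _ ≤ M ^ γ := Real.rpow_le_rpow (Real.rpow_nonneg hba _) h1 hγ.le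
  -- key decay estimate above level M
  have hkey : ∀ x : ℝ, M ≤ x → -a * x ^ (1 + γ) + b * (x + 1) ≤ -(a / 2) * x ^ (1 + γ) := by
    intro x hx
    have hx1 : (1 : ℝ) ≤ x := le_trans hM1 hx
    have hx0 : (0 : ℝ) < x := lt_of_lt_of_le one_pos hx1
    have hxγ : 4 * b / a ≤ x ^ γ :=
      le_trans hMγ (Real.rpow_le_rpow hM0.le hx hγ.le)
    have h4b : 4 * b ≤ a * x ^ γ := by
      rw [div_le_iff₀ ha] at hxγ; linarith [hxγ]
    have hxx : x ^ (1 + γ) = x * x ^ γ := by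
      rw [Real.rpow_add hx0, Real.rpow_one]
    rw [hxx]
    nlinarith [mul_nonneg (sub_nonneg.2 h4b) (by linarith : (0:ℝ) ≤ x - 1),
      mul_nonneg (by linarith : (0:ℝ) ≤ a * x ^ γ - 4 * b) (by linarith : (0:ℝ) ≤ x)]
  refine ⟨max M ((a * γ / 4) ^ (-(1 / γ))), ?_⟩
  intro y y' hy hd hineq t ht
  set C : ℝ := max M ((a * γ / 4) ^ (-(1 / γ))) with hCdef
  have hC0 : (0 : ℝ) ≤ C := le_trans hM0.le (le_max_left _ _)
  have htr : (0 : ℝ) ≤ t ^ (-(1 / γ)) := Real.rpow_nonneg ht.le _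
  -- derivative is negative above level M
  have hneg : ∀ v : ℝ, 0 < v → M ≤ y v → y' v < 0 := by
    intro v hv hMv
    have h1 := hineq v hv
    have h2 := hkey (y v) hMv
    have hyv0 : 0 < y v := lt_of_lt_of_le hM0 hMv
    have h3 : 0 < y v ^ (1 + γ) := Real.rpow_pos_of_pos hyv0 _
    nlinarith
  by_cases hcase : ∃ s : ℝ, 0 < s ∧ s ≤ t ∧ y s ≤ M
  · obtain ⟨s, hs, hst, hys⟩ := hcase
    have hb1 := barrier_aux M y y' hd hneg s t hs hst hys
    have : M ≤ C * (t ^ (-(1 / γ)) + 1) := by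
      have h1 : M ≤ C := le_max_left _ _
      nlinarith
    linarith
  · push_neg at hcase
    -- on (0,t], y > M > 0
    set c : ℝ := a * γ / 2 with hcdef
    have hc0 : 0 < c := by positivity
    set g : ℝ → ℝ := fun v => y v ^ (-γ) - c * v with hgdef
    have ht2 : (0 : ℝ) < t / 2 := by linarith
    have hgderiv : ∀ u ∈ Set.Icc (t / 2) t,
        HasDerivAt g (y' u * (-γ) * y u ^ (-γ - 1) - c) u := by
      intro u hu
      have hu0 : 0 < u := lt_of_lt_of_le ht2 hu.1
      have hyu : M < y u := hcase u hu0 hu.2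
      have hyu0 : 0 < y u := lt_of_lt_of_le hM0 hyu.le
      have hcv : HasDerivAt (fun v : ℝ => c * v) c u := by
        simpa using (hasDerivAt_id u).const_mul c
      exact ((hd u hu0).rpow_const (Or.inl hyu0.ne')).sub hcv
    have hderiv_nonneg : ∀ u ∈ Set.Icc (t / 2) t,
        0 ≤ y' u * (-γ) * y u ^ (-γ - 1) - c := by
      intro u hu
      have hu0 : 0 < u := lt_of_lt_of_le ht2 hu.1
      have hyu : M ≤ y u := (hcase u hu0 hu.2).le
      have hyu0 : 0 < y u := lt_of_lt_of_le hM0 hyu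
      have hP : 0 < y u ^ (-γ - 1) := Real.rpow_pos_of_pos hyu0 _
      have hQ : 0 < y u ^ (1 + γ) := Real.rpow_pos_of_pos hyu0 _
      have hPQ : y u ^ (-γ - 1) * y u ^ (1 + γ) = 1 := by
        rw [← Real.rpow_add hyu0, show -γ - 1 + (1 + γ) = 0 from by ring, Real.rpow_zero]
      have hy'le : y' u ≤ -(a / 2) * y u ^ (1 + γ) :=
        le_trans (hineq u hu0) (hkey (y u) hyu)
      have h5 : γ * y u ^ (-γ - 1) * y' u
          ≤ γ * y u ^ (-γ - 1) * (-(a / 2) * y u ^ (1 + γ)) :=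
        mul_le_mul_of_nonneg_left hy'le (by positivity)
      have h6 : γ * y u ^ (-γ - 1) * (-(a / 2) * y u ^ (1 + γ))
          = -(a * γ / 2) * (y u ^ (-γ - 1) * y u ^ (1 + γ)) := by ring
      rw [h6, hPQ] at h5
      have : c = a * γ / 2 := rfl
      nlinarith [h5]
    have hgmono : MonotoneOn g (Set.Icc (t / 2) t) := by
      apply monotoneOn_of_deriv_nonneg (convex_Icc _ _)
      · exact fun u hu => (hgderiv u hu).continuousAt.continuousWithinAt
      · intro u hu
        rw [interior_Icc] at hu
        exact (hgderiv u (Set.Ioo_subset_Icc_self hu)).differentiableAt.differentiableWithinAt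
      · intro u hu
        rw [interior_Icc] at hu
        rw [(hgderiv u (Set.Ioo_subset_Icc_self hu)).deriv]
        exact hderiv_nonneg u (Set.Ioo_subset_Icc_self hu)
    have hmem1 : t / 2 ∈ Set.Icc (t / 2) t := ⟨le_refl _, by linarith⟩
    have hmem2 : t ∈ Set.Icc (t / 2) t := ⟨by linarith, le_refl _⟩
    have hg12 : g (t / 2) ≤ g t := hgmono hmem1 hmem2 (by linarith)
    have hw2 : 0 ≤ y (t / 2) ^ (-γ) := Real.rpow_nonneg (hy _ ht2) _
    have hwt : a * γ * t / 4 ≤ y t ^ (-γ) := by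
      simp only [hgdef] at hg12
      have hc : c = a * γ / 2 := rfl
      nlinarith [hg12, hw2]
    have hpos : 0 < a * γ * t / 4 := by positivity
    have hyt0 : 0 ≤ y t := hy t ht
    have hz : -(1 / γ) ≤ 0 := by
      have : 0 < 1 / γ := by positivity
      linarith
    have h3 : (y t ^ (-γ)) ^ (-(1 / γ)) ≤ (a * γ * t / 4) ^ (-(1 / γ)) :=
      Real.rpow_le_rpow_of_nonpos hpos hwt hz
    have h4 : (y t ^ (-γ)) ^ (-(1 / γ)) = y t := by
      rw [← Real.rpow_mul hyt0, show -γ * -(1 / γ) = 1 from by field_simp, Real.rpow_one]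
    have h5 : (a * γ * t / 4) ^ (-(1 / γ)) = (a * γ / 4) ^ (-(1 / γ)) * t ^ (-(1 / γ)) := by
      rw [show a * γ * t / 4 = (a * γ / 4) * t from by ring,
        Real.mul_rpow (by positivity) ht.le]
    have h6 : (a * γ / 4) ^ (-(1 / γ)) ≤ C := le_max_right _ _
    have h7 : (a * γ / 4) ^ (-(1 / γ)) * t ^ (-(1 / γ)) ≤ C * t ^ (-(1 / γ)) :=
      mul_le_mul_of_nonneg_right h6 htr
    have h8 : C * (t ^ (-(1 / γ)) + 1) = C * t ^ (-(1 / γ)) + C := by ring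
    rw [h8]
    rw [h5] at h3
    rw [h4] at h3
    linarith
end
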